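/- If λ is a Mahlo cardinal, then for every μ < λ the Laver collapse L(κ,λ) has the (λ,λ,<μ)-chain condition: for every family {p_α : α < λ} of conditions there is a subfamily of size λ all of whose subsets of size < μ have lower bounds. -/

import Mathlib

noncomputable section

/-- A collapse condition is coded as a set of triples `(γ, i, β)`, meaning `p(γ)(i) = β`. -/
abbrev STriple : Type 1 := Cardinal × Ordinal × Ordinal

/-- The domain of such a coded condition: the coordinates mentioned. -/
def silDom (p : Set STriple) : Set Cardinal := {γ | ∃ t ∈ p, t.1 = γ}

/-- A set `d` of cardinals is an Easton subset of `λ`: for every regular `α ≤ λ`,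
`sup (d ∩ α) < α`. -/
def EastonC (lam : Cardinal) (d : Set Cardinal) : Prop :=
  ∀ c : Cardinal, c.IsRegular → c ≤ lam → ∃ β < c, ∀ γ ∈ d, γ < c → γ ≤ β

/-- `p` is a condition of the Laver collapse `L(κ, λ)`: a function on an Easton set of
fewer than `λ` many regular cardinals `γ` with `κ < γ < λ`, each `p(γ)` a partial
function from `κ` to `γ`, all domains `dom p(γ)` uniformly bounded by some `ξ < κ`.
The order is reverse inclusion. -/
def IsLaverCond (κ lam : Cardinal) (p : Set STriple) : Prop :=
  (∀ t ∈ p, t.1.IsRegular ∧ κ < t.1 ∧ t.1 < lam ∧ t.2.1 < κ.ord ∧ t.2.2 < t.1.ord) ∧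
  (∀ t ∈ p, ∀ s ∈ p, t.1 = s.1 → t.2.1 = s.2.1 → t.2.2 = s.2.2) ∧
  Cardinal.mk (silDom p) < Cardinal.lift.{1} lam ∧
  EastonC lam (silDom p) ∧
  (∃ ξ < κ.ord, ∀ t ∈ p, t.2.1 < ξ)

end
/-- An inaccessible cardinal: uncountable, regular, strong limit. -/
def IsInacc (c : Cardinal) : Prop :=
  Cardinal.aleph0 < c ∧ c.IsRegular ∧ c.IsStrongLimit

/-- `C` is club in `δ`: a subset of `δ`, unbounded in `δ`, and closed: every nonzero
`a < δ` which is a limit of elements of `C` belongs to `C`. -/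
def IsClubIn (C : Set Ordinal) (δ : Ordinal) : Prop :=
  C ⊆ Set.Iio δ ∧ (∀ a < δ, ∃ b ∈ C, a < b) ∧
  ∀ a < δ, 0 < a → (∀ b < a, ∃ c ∈ C, b < c ∧ c < a) → a ∈ C

/-- A Mahlo cardinal: inaccessible, and every club in it contains an inaccessible. -/
def IsMahlo (c : Cardinal) : Prop :=
  IsInacc c ∧ ∀ C : Set Ordinal, IsClubIn C c.ord →
    ∃ r : Cardinal, IsInacc r ∧ r.ord ∈ C

/-!
Bound the domain of each `p i` by some `β i < λ`. The closure points of `i ↦ β i` above `μ` form a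
club, so by Mahloness there are inaccessible closure points `i`, and at each of them the Easton
property bounds `dom p i ∩ i` by some `G i < i`. A pressing-down argument yields `ν < λ` with
`G i ≤ ν` for `λ` many such `i`; as `λ` is a strong limit, there are fewer than `λ` restrictions of
conditions to coordinates `≤ ν`, so `λ` many of the `p i` share their restriction and their bound
`ξ < κ`. These form a Δ-system. The union of fewer than `μ` of its members is a condition: at a
regular `c`, the members at positions `≥ c` contribute only root coordinates below `c`, and
there are fewer than `c` members at positions `< c`.
-/

open Cardinal Ordinal Set

universe u v

theorem Cardinal.IsStrongLimit.lift {c : Cardinal.{u}} (hc : c.IsStrongLimit) :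
    (Cardinal.lift.{v} c).IsStrongLimit := by
  refine ⟨by simpa using hc.ne_zero, fun x hx => ?_⟩
  obtain ⟨y, hy, rfl⟩ := lt_lift_iff.1 hx
  rw [← lift_two_power, lift_lt]
  exact hc.isStrongPrelimit hy

theorem Cardinal.mk_Iic_le_lift (ν : Cardinal.{u}) :
    #(Iic ν) ≤ Cardinal.lift.{u + 1} (ν + 1) := by
  have hinj : Function.Injective fun γ : Iic ν =>
      (⟨γ.1.ord, Order.lt_add_one_iff.2 (ord_le_ord.2 γ.2)⟩ : Iio (ν.ord + 1)) :=
    fun γ δ h => Subtype.ext (ord_injective (congrArg Subtype.val h))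
  calc #(Iic ν) ≤ #(Iio (ν.ord + 1)) := mk_le_of_injective hinj
    _ = Cardinal.lift.{u + 1} (ν + 1) := by
      rw [Cardinal.mk_Iio_ordinal, Ordinal.card_add_one, card_ord]

theorem Cardinal.exists_le_mk_setOf_eq {ι : Type u} {β : Type v} (f : ι → β) {A : Set ι}
    {c : Cardinal.{u}} (hc : c.IsRegular) (hA : c ≤ #A)
    (hf : Cardinal.lift.{u} #(f '' A) < Cardinal.lift.{v} c) :
    ∃ b, c ≤ #{i | i ∈ A ∧ f i = b} := by
  let g : A → Shrink.{u} (f '' A) := fun i => equivShrink _ ⟨f i, mem_image_of_mem f i.2⟩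
  have hg : #(Shrink.{u} (f '' A)) < c.ord.cof := by
    rwa [hc.cof_ord, ← lift_lt.{u, v}, lift_mk_shrink']
  obtain ⟨b, hb⟩ := infinite_pigeonhole_card g c hA hc.aleph0_le hg
  refine ⟨((equivShrink _).symm b).1, hb.trans (mk_le_of_injective (f := fun i : g ⁻¹' {b} =>
    (⟨i.1.1, i.1.2, ?_⟩ : {i | i ∈ A ∧ f i = _})) fun i j h => ?_)⟩
  · have hi := i.2
    simp only [mem_preimage, mem_singleton_iff, g] at hi
    simp [← hi]
  · exact Subtype.ext <| Subtype.ext <| by simpa using congrArg Subtype.val h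

namespace Ordinal.ToType

variable {o : Ordinal.{u}}

theorem coe_lt (i : o.ToType) : (i : Ordinal) < o := (ToType.mk.symm i).2

theorem coe_lt_coe {i j : o.ToType} : (i : Ordinal) < j ↔ i < j := ToType.mk.symm.lt_iff_lt

@[simp]
theorem coe_mk {x : Ordinal} (hx : x < o) : ((ToType.mk ⟨x, hx⟩ : o.ToType) : Ordinal) = x := by
  simp [ToType.toOrd]

theorem exists_coe_lt_of_mk_lt {c : Cardinal.{u}} (hc : c.IsRegular) {T : Set c.ord.ToType}
    (hT : #T < c) : ∃ b < c.ord, ∀ i ∈ T, (i : Ordinal) < b := by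
  refine ⟨⨆ i : T, ((i : Ordinal) + 1), iSup_lt_of_lt_cof (by rwa [hc.cof_ord])
    fun i => (isSuccLimit_ord hc.aleph0_le).add_one_lt (coe_lt _), fun i hi => ?_⟩
  exact (lt_add_one _).trans_le (Ordinal.le_iSup (fun i : T => (i : Ordinal) + 1) ⟨i, hi⟩)

theorem mk_setOf_coe_lt_lt {c : Cardinal.{u}} {x : Ordinal} (hx : x < c.ord) :
    #{i : c.ord.ToType | (i : Ordinal) < x} < c := by
  have : {i : c.ord.ToType | (i : Ordinal) < x} = Iio (ToType.mk ⟨x, hx⟩) := by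
    ext i; rw [mem_Iio, ← coe_lt_coe, coe_mk]; rfl
  rw [this]
  simpa using mk_Iio_lt (ToType.mk ⟨x, hx⟩ : c.ord.ToType) (by simp)

end Ordinal.ToType

def IsClosurePoint {o : Ordinal.{u}} (F : o.ToType → Ordinal.{u}) (x : Ordinal.{u}) : Prop :=
  ∀ i : o.ToType, (i : Ordinal) < x → F i < x

theorem isClubIn_setOf_isClosurePoint {c : Cardinal.{u}} (hc : c.IsRegular) (hc₀ : ℵ₀ < c)
    {F : c.ord.ToType → Ordinal} (hF : ∀ i, F i < c.ord) {b : Ordinal} (hb : b < c.ord) :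
    IsClubIn {x | x < c.ord ∧ b < x ∧ IsClosurePoint F x} c.ord := by
  have hlim := isSuccLimit_ord hc.aleph0_le
  refine ⟨fun x hx => hx.1, fun a ha => ?_, fun a ha ha₀ hC => ⟨ha, ?_, fun i hi => ?_⟩⟩
  · let g : Ordinal → Ordinal := fun x => ⨆ i : {i : c.ord.ToType // (i : Ordinal) < x}, (F i + 1)
    have hg : ∀ x < c.ord, g x < c.ord := fun x hx =>
      iSup_lt_of_lt_cof (by rw [hc.cof_ord]; exact ToType.mk_setOf_coe_lt_lt hx)
        fun i => hlim.add_one_lt (hF i)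
    set x₀ := max a b + 1
    have hx₀ : max a b < nfp g x₀ := (lt_add_one _).trans_le (le_nfp g x₀)
    refine ⟨nfp g x₀, ⟨nfp_lt_ord_of_isRegular hc hc₀.ne' hg (hlim.add_one_lt (max_lt ha hb)),
      (le_max_right a b).trans_lt hx₀, fun i hi => ?_⟩, (le_max_left a b).trans_lt hx₀⟩
    obtain ⟨n, hn⟩ := lt_nfp_iff.1 hi
    calc F i < F i + 1 := lt_add_one _
      _ ≤ g (g^[n] x₀) :=
        Ordinal.le_iSup (fun j : {j : c.ord.ToType // (j : Ordinal) < _} => F j + 1) ⟨i, hn⟩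
      _ = g^[n + 1] x₀ := (Function.iterate_succ_apply' g n x₀).symm
      _ ≤ nfp g x₀ := iterate_le_nfp g x₀ (n + 1)
  · obtain ⟨x, hx, -, hxa⟩ := hC 0 ha₀
    exact hx.2.1.trans hxa
  · obtain ⟨x, hx, hix, hxa⟩ := hC i hi
    exact (hx.2.2 i hix).trans hxa

def IsInaccClosurePoint {o : Ordinal.{u}} (F : o.ToType → Ordinal.{u}) (b x : Ordinal.{u}) :
    Prop :=
  (∃ ρ, IsInacc ρ ∧ ρ.ord = x) ∧ b < x ∧ IsClosurePoint F x

theorem IsMahlo.exists_le_mk_setOf_le {lam : Cardinal.{u}} (hM : IsMahlo lam)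
    {F : lam.ord.ToType → Ordinal} (hF : ∀ i, F i < lam.ord) {b : Ordinal} (hb : b < lam.ord)
    {G : lam.ord.ToType → Cardinal}
    (hG : ∀ i : lam.ord.ToType, IsInaccClosurePoint F b i → (G i).ord < i) :
    ∃ ν < lam, lam ≤ #{i : lam.ord.ToType | IsInaccClosurePoint F b i ∧ G i ≤ ν} := by
  obtain ⟨⟨hlam₀, hlam, -⟩, hclub⟩ := hM
  by_contra! hsmall
  choose! H hHlt hH using fun ν hν => ToType.exists_coe_lt_of_mk_lt hlam (hsmall ν hν)
  -- a closure point `x` of `F'` lies above every set `{i | … ∧ G i ≤ ν}` with `ν.ord < x`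
  let F' : lam.ord.ToType → Ordinal := fun i => max (F i) (H (i : Ordinal).card)
  have hF' : ∀ i, F' i < lam.ord := fun i =>
    max_lt (hF i) (hHlt _ (lt_ord.1 (ToType.coe_lt i)))
  obtain ⟨ρ, hρ, hρlt, hbρ, hρF'⟩ :=
    hclub _ (isClubIn_setOf_isClosurePoint hlam hlam₀ hF' hb)
  set i : lam.ord.ToType := ToType.mk ⟨ρ.ord, hρlt⟩
  have hi : IsInaccClosurePoint F b i := by
    refine ⟨⟨ρ, hρ, by simp [i]⟩, by simpa [i] using hbρ, fun j hj => ?_⟩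
    simp only [i, ToType.coe_mk] at hj ⊢
    exact (le_max_left _ _).trans_lt (hρF' j hj)
  have hGi : (G i).ord < ρ.ord := by simpa [i] using hG i hi
  have hGlam : (G i).ord < lam.ord := hGi.trans hρlt
  have h₁ : ρ.ord < H (G i) := by
    simpa [i] using hH (G i) (ord_lt_ord.1 hGlam) i ⟨hi, le_rfl⟩
  have h₂ : H (G i) < ρ.ord := by
    simpa using (le_max_right _ _).trans_lt (hρF' (ToType.mk ⟨_, hGlam⟩) (by simpa using hGi))
  exact (h₁.trans h₂).false

def IsBddIn (c : Cardinal.{u}) (d : Set Cardinal.{u}) : Prop :=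
  ∃ β < c, ∀ γ ∈ d, γ < c → γ ≤ β

namespace IsBddIn

variable {c : Cardinal.{u}} {d d' : Set Cardinal.{u}}

theorem mono (h : IsBddIn c d) (hd : ∀ γ ∈ d', γ < c → γ ∈ d) : IsBddIn c d' :=
  let ⟨β, hβ, hdβ⟩ := h
  ⟨β, hβ, fun γ hγ hγc => hdβ γ (hd γ hγ hγc) hγc⟩

theorem union (h : IsBddIn c d) (h' : IsBddIn c d') : IsBddIn c (d ∪ d') := by
  obtain ⟨β, hβ, hdβ⟩ := h
  obtain ⟨β', hβ', hdβ'⟩ := h'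
  refine ⟨max β β', max_lt hβ hβ', ?_⟩
  rintro γ (hγ | hγ) hγc
  exacts [(hdβ γ hγ hγc).trans (le_max_left _ _), (hdβ' γ hγ hγc).trans (le_max_right _ _)]

theorem iUnion {ι : Type u} (hc : c.IsRegular) (hι : #ι < c) {d : ι → Set Cardinal.{u}}
    (h : ∀ i, IsBddIn c (d i)) : IsBddIn c (⋃ i, d i) := by
  choose β hβ hdβ using h
  refine ⟨⨆ i, β i, iSup_lt_of_lt_cof_ord (by rwa [hc.cof_ord]) hβ, fun γ hγ hγc => ?_⟩
  obtain ⟨i, hγi⟩ := mem_iUnion.1 hγ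
  exact (hdβ i γ hγi hγc).trans (le_ciSup Cardinal.bddAbove_of_small i)

end IsBddIn

theorem EastonC.mk_lt {lam : Cardinal.{u}} (hlam : lam.IsRegular) {d : Set Cardinal.{u}}
    (hd : EastonC lam d) (hlt : ∀ γ ∈ d, γ < lam) : #d < Cardinal.lift.{u + 1} lam := by
  obtain ⟨β, hβ, hdβ⟩ : IsBddIn lam d := hd lam hlam le_rfl
  calc #d ≤ #(Iic β) := mk_le_mk_of_subset fun γ hγ => hdβ γ hγ (hlt γ hγ)
    _ ≤ Cardinal.lift.{u + 1} (β + 1) := mk_Iic_le_lift β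
    _ < Cardinal.lift.{u + 1} lam := lift_lt.2 (add_one_lt_of_lt hlam.aleph0_le hβ)

theorem IsLaverCond.exists_le {κ lam : Cardinal.{0}} {p : Set STriple}
    (hp : IsLaverCond κ lam p) (hlam : lam.IsRegular) : ∃ β < lam, ∀ t ∈ p, t.1 ≤ β := by
  obtain ⟨β, hβ, hpβ⟩ := hp.2.2.2.1 lam hlam le_rfl
  exact ⟨β, hβ, fun t ht => hpβ t.1 ⟨t, ht, rfl⟩ (hp.1 t ht).2.2.1⟩

theorem mk_setOf_triple_lt {κ lam ν : Cardinal.{0}} (hlam : lam.IsStrongLimit) (hκ : κ < lam)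
    (hν : ν < lam) :
    #{t : STriple | t.1 ≤ ν ∧ t.2.1 < κ.ord ∧ t.2.2 < ν.ord} < Cardinal.lift.{1} lam := by
  have hℵ := hlam.lift.aleph0_le
  have : {t : STriple | t.1 ≤ ν ∧ t.2.1 < κ.ord ∧ t.2.2 < ν.ord} =
      Iic ν ×ˢ Iio κ.ord ×ˢ Iio ν.ord := by
    ext; simp
  rw [this, mk_setProd, mk_setProd, Cardinal.mk_Iio_ordinal, Cardinal.mk_Iio_ordinal, card_ord,
    card_ord]
  exact mul_lt_of_lt hℵ
    ((mk_Iic_le_lift ν).trans_lt (lift_lt.2 (add_one_lt_of_lt hlam.aleph0_le hν)))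
    (mul_lt_of_lt hℵ (lift_lt.2 hκ) (lift_lt.2 hν))

/-- `(p i)_{i ∈ Z}` is a Δ-system whose root is the common part of the conditions below their own
positions, while the domain of each member lies below the positions of all later members. -/
structure IsDeltaSystem (κ μ : Cardinal.{0}) {o : Ordinal.{0}} (p : o.ToType → Set STriple)
    (Z : Set o.ToType) : Prop where
  ord_lt_coe : ∀ i ∈ Z, μ.ord < i
  ord_lt_coe_of_lt : ∀ i ∈ Z, ∀ j ∈ Z, i < j → ∀ t ∈ p i, t.1.ord < j
  mem_of_ord_lt_coe : ∀ i ∈ Z, ∀ t ∈ p i, t.1.ord < i → ∀ j ∈ Z, t ∈ p j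
  exists_snd_fst_lt : ∃ ξ < κ.ord, ∀ i ∈ Z, ∀ t ∈ p i, t.2.1 < ξ

namespace IsDeltaSystem

variable {κ lam μ : Cardinal.{0}} {o : Ordinal.{0}} {p : o.ToType → Set STriple}
  {Z s : Set o.ToType}

theorem mem_or_mem (hZ : IsDeltaSystem κ μ p Z) {i j : o.ToType} (hi : i ∈ Z) (hj : j ∈ Z)
    {t t' : STriple} (ht : t ∈ p i) (ht' : t' ∈ p j) (h : t.1 = t'.1) : t' ∈ p i ∨ t ∈ p j := by
  rcases lt_trichotomy i j with hij | rfl | hij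
  · exact .inl <| hZ.mem_of_ord_lt_coe j hj t' ht'
      (h ▸ hZ.ord_lt_coe_of_lt i hi j hj hij t ht) i hi
  · exact .inl ht'
  · exact .inr <| hZ.mem_of_ord_lt_coe i hi t ht
      (h ▸ hZ.ord_lt_coe_of_lt j hj i hi hij t' ht') j hj

theorem eastonC_silDom_biUnion (hZ : IsDeltaSystem κ μ p Z)
    (hp : ∀ i, IsLaverCond κ lam (p i)) {i₀ : o.ToType} (hi₀ : i₀ ∈ Z) (hsZ : s ⊆ Z)
    (hs : #s < μ) : EastonC lam (silDom (⋃ i ∈ s, p i)) := by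
  intro c hc hcl
  have hsmall : #{i : s // (i : Ordinal) < c.ord} < c := by
    rcases lt_or_ge μ c with hμc | hcμ
    · exact (mk_subtype_le _).trans_lt (hs.trans hμc)
    · have : IsEmpty {i : s // (i : Ordinal) < c.ord} := ⟨fun i =>
        ((ord_le_ord.2 hcμ).trans (hZ.ord_lt_coe i.1 (hsZ i.1.2)).le).not_gt i.2⟩
      simpa using hc.pos
  refine (IsBddIn.union ((hp i₀).2.2.2.1 c hc hcl)
    (IsBddIn.iUnion hc hsmall fun i => (hp i).2.2.2.1 c hc hcl)).mono ?_
  rintro γ ⟨t, ht, rfl⟩ hγc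
  obtain ⟨i, his, hti⟩ := mem_iUnion₂.1 ht
  by_cases hic : (i : Ordinal) < c.ord
  · exact .inr (mem_iUnion.2 ⟨⟨⟨i, his⟩, hic⟩, t, hti, rfl⟩)
  · refine .inl ⟨t, hZ.mem_of_ord_lt_coe i (hsZ his) t hti ?_ i₀ hi₀, rfl⟩
    exact (ord_lt_ord.2 hγc).trans_le (not_lt.1 hic)

theorem isLaverCond_biUnion (hZ : IsDeltaSystem κ μ p Z) (hlam : lam.IsRegular)
    (hp : ∀ i, IsLaverCond κ lam (p i)) (hZ₀ : Z.Nonempty) (hsZ : s ⊆ Z) (hs : #s < μ) :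
    IsLaverCond κ lam (⋃ i ∈ s, p i) := by
  obtain ⟨i₀, hi₀⟩ := hZ₀
  have hmem : ∀ t ∈ ⋃ i ∈ s, p i, ∃ i ∈ s, t ∈ p i := fun t ht => by
    simpa only [mem_iUnion, exists_prop] using ht
  have heaston := hZ.eastonC_silDom_biUnion hp hi₀ hsZ hs
  refine ⟨fun t ht => ?_, fun t ht t' ht' h₁ h₂ => ?_, heaston.mk_lt hlam ?_, heaston, ?_⟩
  · obtain ⟨i, -, hti⟩ := hmem t ht
    exact (hp i).1 t hti
  · obtain ⟨i, hi, hti⟩ := hmem t ht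
    obtain ⟨j, hj, htj⟩ := hmem t' ht'
    rcases hZ.mem_or_mem (hsZ hi) (hsZ hj) hti htj h₁ with hti' | htj'
    exacts [(hp i).2.1 t hti t' hti' h₁ h₂, (hp j).2.1 t htj' t' htj h₁ h₂]
  · rintro γ ⟨t, ht, rfl⟩
    obtain ⟨i, -, hti⟩ := hmem t ht
    exact ((hp i).1 t hti).2.2.1
  · obtain ⟨ξ, hξ, hpξ⟩ := hZ.exists_snd_fst_lt
    refine ⟨ξ, hξ, fun t ht => ?_⟩
    obtain ⟨i, hi, hti⟩ := hmem t ht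
    exact hpξ i (hsZ hi) t hti

end IsDeltaSystem

theorem IsMahlo.exists_large_subfamily_fst_le {κ lam μ : Cardinal.{0}} (hM : IsMahlo lam)
    (hμ : μ < lam) {p : lam.ord.ToType → Set STriple} (hp : ∀ i, IsLaverCond κ lam (p i)) :
    ∃ ν < lam, ∃ A : Set lam.ord.ToType, lam ≤ #A ∧ (∀ i ∈ A, μ.ord < i) ∧
      (∀ i ∈ A, ∀ j ∈ A, i < j → ∀ t ∈ p i, t.1.ord < j) ∧
      (∀ i ∈ A, ∀ t ∈ p i, t.1.ord < i → t.1 ≤ ν) := by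
  choose β hβ hpβ using fun i => (hp i).exists_le hM.1.2.1
  have hG : ∀ i : lam.ord.ToType, IsInaccClosurePoint (fun j => (β j).ord) μ.ord i →
      ∃ g : Cardinal, g.ord < i ∧ ∀ t ∈ p i, t.1.ord < i → t.1 ≤ g := by
    rintro i ⟨⟨ρ, hρ, hρi⟩, -⟩
    obtain ⟨g, hg, hpg⟩ :=
      (hp i).2.2.2.1 ρ hρ.2.1 (ord_le_ord.1 (hρi ▸ (ToType.coe_lt i).le))
    refine ⟨g, hρi ▸ ord_lt_ord.2 hg, fun t ht htρ => hpg t.1 ⟨t, ht, rfl⟩ ?_⟩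
    exact ord_lt_ord.1 (hρi ▸ htρ)
  choose! G hGlt hpG using hG
  obtain ⟨ν, hν, hA⟩ :=
    hM.exists_le_mk_setOf_le (fun i => ord_lt_ord.2 (hβ i)) (ord_lt_ord.2 hμ) hGlt
  refine ⟨ν, hν, _, hA, fun i hi => hi.1.2.1, fun i hi j hj hij t ht => ?_,
    fun i hi t ht hti => (hpG i hi.1 t ht hti).trans hi.2⟩
  exact (ord_le_ord.2 (hpβ i t ht)).trans_lt (hj.1.2.2 i (ToType.coe_lt_coe.2 hij))

theorem IsMahlo.exists_isDeltaSystem {κ lam μ : Cardinal.{0}} (hM : IsMahlo lam)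
    (hκ : κ < lam) (hμ : μ < lam) {p : lam.ord.ToType → Set STriple}
    (hp : ∀ i, IsLaverCond κ lam (p i)) :
    ∃ Z : Set lam.ord.ToType, #Z = lam ∧ IsDeltaSystem κ μ p Z := by
  obtain ⟨ν, hν, A, hA, hμA, hsep, hlow⟩ := hM.exists_large_subfamily_fst_le hμ hp
  obtain ⟨⟨-, hlam, hlim⟩, -⟩ := hM
  choose ξ hξ hpξ using fun i => (hp i).2.2.2.2
  let T : Set STriple := {t | t.1 ≤ ν ∧ t.2.1 < κ.ord ∧ t.2.2 < ν.ord}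
  let f : lam.ord.ToType → Set STriple × Ordinal := fun i => (p i ∩ {t | t.1 ≤ ν}, ξ i)
  have hfA : f '' A ⊆ 𝒫 T ×ˢ Iio κ.ord := by
    rintro _ ⟨i, -, rfl⟩
    refine ⟨fun t ht => ⟨ht.2, ((hp i).1 t ht.1).2.2.2.1, ?_⟩, hξ i⟩
    exact ((hp i).1 t ht.1).2.2.2.2.trans_le (ord_le_ord.2 ht.2)
  have hf : #(f '' A) < Cardinal.lift.{1} lam :=
    calc #(f '' A) ≤ #(𝒫 T ×ˢ Iio κ.ord) := mk_le_mk_of_subset hfA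
      _ = 2 ^ #T * Cardinal.lift.{1} κ := by
        rw [mk_setProd, mk_powerset, Cardinal.mk_Iio_ordinal, card_ord]
      _ < Cardinal.lift.{1} lam := mul_lt_of_lt hlim.lift.aleph0_le
        (hlim.lift.isStrongPrelimit (mk_setOf_triple_lt hlim hκ hν)) (lift_lt.2 hκ)
  obtain ⟨v, hv⟩ := exists_le_mk_setOf_eq f hlam hA (by rwa [Cardinal.lift_uzero])
  obtain ⟨i₀, hi₀⟩ : Set.Nonempty {i | i ∈ A ∧ f i = v} :=
    nonempty_coe_sort.1 (mk_ne_zero_iff.1 (hlam.pos.trans_le hv).ne')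
  refine ⟨_, le_antisymm ((mk_set_le _).trans (mk_ord_toType lam).le) hv,
    ⟨fun i hi => hμA i hi.1, fun i hi j hj => hsep i hi.1 j hj.1, fun i hi t ht hti j hj => ?_,
      ⟨ξ i₀, hξ i₀, fun i hi t ht => ?_⟩⟩⟩
  · have hij : p i ∩ {t | t.1 ≤ ν} = p j ∩ {t | t.1 ≤ ν} :=
      congrArg Prod.fst (hi.2.trans hj.2.symm)
    exact (hij ▸ ⟨ht, hlow i hi.1 t ht hti⟩ : t ∈ p j ∩ {t | t.1 ≤ ν}).1
  · have hij : ξ i = ξ i₀ := congrArg Prod.snd (hi.2.trans hi₀.2.symm)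
    exact hij ▸ hpξ i t ht

theorem stmt12_general (κ lam μ : Cardinal.{0}) (hκlam : κ < lam)
    (hM : IsMahlo lam) (hμ : μ < lam)
    (p : lam.ord.ToType → Set STriple) (hp : ∀ i, IsLaverCond κ lam (p i)) :
    ∃ Z : Set lam.ord.ToType, Cardinal.mk Z = lam ∧
      ∀ s ⊆ Z, Cardinal.mk s < μ →
        ∃ r : Set STriple, IsLaverCond κ lam r ∧ ∀ i ∈ s, p i ⊆ r := by
  have hlam : lam.IsRegular := hM.1.2.1
  obtain ⟨Z, hZ, hΔ⟩ := hM.exists_isDeltaSystem hκlam hμ hp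
  have hZ₀ : Z.Nonempty := nonempty_coe_sort.1 (mk_ne_zero_iff.1 (hZ.symm ▸ hlam.pos.ne'))
  exact ⟨Z, hZ, fun s hsZ hs =>
    ⟨_, hΔ.isLaverCond_biUnion hlam hp hZ₀ hsZ hs, fun i hi => subset_biUnion_of_mem hi⟩⟩

/-- If `λ` is Mahlo, then for every `μ < λ` the Laver collapse `L(κ,λ)` has the
`(λ,λ,<μ)`-chain condition: every λ-indexed family of conditions has a λ-sized
subfamily all of whose subsets of size `< μ` have a common lower bound. -/
theorem stmt12 (κ lam μ : Cardinal.{0}) (hκ : κ.IsRegular) (hκlam : κ < lam)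
    (hM : IsMahlo lam) (hμ : μ < lam)
    (p : lam.ord.ToType → Set STriple) (hp : ∀ i, IsLaverCond κ lam (p i)) :
    ∃ Z : Set lam.ord.ToType, Cardinal.mk Z = lam ∧
      ∀ s ⊆ Z, Cardinal.mk s < μ →
        ∃ r : Set STriple, IsLaverCond κ lam r ∧ ∀ i ∈ s, p i ⊆ r :=
  stmt12_general κ lam μ hκlam hM hμ p hp
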